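/- arXiv:1502.06469 — 6 statements merged into one kernel-verified Lean document; each statement's English description precedes it below -/
import Mathlib

section
/- (Nonexistence of period-3 solutions.) Let α, β ∈ ℂ with α² − αβ + β² ≠ 0, and let z₀, z₁, z₂ be nonzero complex numbers satisfying the period-3 system z₀ = α/z₂ + β/z₁, z₁ = α/z₀ + β/z₂, z₂ = α/z₁ + β/z₀. Then z₀ = z₁ = z₂ and z₀² = α + β; i.e., the only solutions of the period-3 system are the equilibria, so Eq.(1) has no solution of prime period 3. -/
/-! Clearing denominators, the three equations say that `z₀ z₁ z₂` equals each of
`α z₁ + β z₂`, `α z₂ + β z₀` and `α z₀ + β z₁`. Subtracting these gives a circulant linear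
system in the differences `zᵢ - zⱼ` with determinant `α² - αβ + β²`, so all `zᵢ` coincide,
and then `z₀³ = (α + β) z₀`. -/

theorem mul_mul_eq_of_eq_div_add_div {K : Type*} [Field K] {a b x y z : K}
    (hy : y ≠ 0) (hz : z ≠ 0) (h : x = a / z + b / y) : x * y * z = a * y + b * z := by
  rw [h]
  field_simp

theorem eq_and_eq_of_cyclic_eq {R : Type*} [CommRing R] [NoZeroDivisors R] {a b x y z : R}
    (hab : a ^ 2 - a * b + b ^ 2 ≠ 0)
    (hxy : a * y + b * z = a * z + b * x) (hyz : a * z + b * x = a * x + b * y) :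
    x = y ∧ y = z := by
  have hx : (a ^ 2 - a * b + b ^ 2) * (x - y) = 0 := by
    linear_combination -(a * hxy) - (a - b) * hyz
  have hy : (a ^ 2 - a * b + b ^ 2) * (y - z) = 0 := by
    linear_combination (a - b) * hxy - b * hyz
  exact ⟨sub_eq_zero.mp ((mul_eq_zero.mp hx).resolve_left hab),
    sub_eq_zero.mp ((mul_eq_zero.mp hy).resolve_left hab)⟩

/-- Nonexistence of period-3 solutions of Eq.(1): if `α² − αβ + β² ≠ 0` and
nonzero `z₀, z₁, z₂` satisfy the period-3 system, then they are all equal to a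
common equilibrium value, i.e. `z₀ = z₁ = z₂` with `z₀² = α + β`. -/
theorem no_prime_period_three_eq1 (α β z₀ z₁ z₂ : ℂ)
    (hparam : α ^ 2 - α * β + β ^ 2 ≠ 0)
    (h0 : z₀ ≠ 0) (h1 : z₁ ≠ 0) (h2 : z₂ ≠ 0)
    (e0 : z₀ = α / z₂ + β / z₁)
    (e1 : z₁ = α / z₀ + β / z₂)
    (e2 : z₂ = α / z₁ + β / z₀) :
    z₀ = z₁ ∧ z₁ = z₂ ∧ z₀ ^ 2 = α + β := by
  have E0 := mul_mul_eq_of_eq_div_add_div h1 h2 e0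
  have E1 := mul_mul_eq_of_eq_div_add_div h2 h0 e1
  have E2 := mul_mul_eq_of_eq_div_add_div h0 h1 e2
  obtain ⟨h01, h12⟩ := eq_and_eq_of_cyclic_eq (x := z₀) (y := z₁) (z := z₂) hparam
    (by linear_combination E1 - E0) (by linear_combination E2 - E1)
  subst h01 h12
  refine ⟨rfl, rfl, mul_right_cancel₀ h0 ?_⟩
  linear_combination E0
end

section
/- (Nonexistence of prime period-4 solutions of Eq.(8).) Let α, β ∈ ℂ with α² + β² ≠ 0, and let z₀, z₁, z₂, z₃ be nonzero complex numbers satisfying the period-4 system z₁ = α + β z₀/z₃, z₂ = α + β z₁/z₀, z₃ = α + β z₂/z₁, z₀ = α + β z₃/z₂. Then z₀ = z₂ and z₁ = z₃; i.e., every solution of the period-4 system has period dividing 2, so the equation z_{n+1} = α + β z_n/z_{n-1} has no solution of prime period 4. -/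
/-! Each product `z₁ z₃` and `z₀ z₂` occurs in two of the cleared equations; equating the two
expressions gives a linear system in `z₀ - z₂` and `z₁ - z₃` with determinant `α² + β²`. -/

theorem mul_eq_add_of_eq_add_div {K : Type*} [Field K] {a b x y w : K} (hw : w ≠ 0)
    (h : y = a + b * x / w) : y * w = a * w + b * x := by
  rw [h]
  field_simp

theorem eq_zero_and_eq_zero_of_sq_add_sq_ne_zero {R : Type*} [CommRing R] [NoZeroDivisors R]
    {a b u v : R} (hdet : a ^ 2 + b ^ 2 ≠ 0) (h₁ : a * u + b * v = 0) (h₂ : a * v - b * u = 0) :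
    u = 0 ∧ v = 0 := by
  have hu : (a ^ 2 + b ^ 2) * u = 0 := by linear_combination a * h₁ - b * h₂
  have hv : (a ^ 2 + b ^ 2) * v = 0 := by linear_combination b * h₁ + a * h₂
  exact ⟨(mul_eq_zero.mp hu).resolve_left hdet, (mul_eq_zero.mp hv).resolve_left hdet⟩

/-- Nonexistence of prime period-4 solutions of Eq.(8) `z_{n+1} = α + β z_n/z_{n-1}`:
if `α² + β² ≠ 0` and nonzero `z₀, z₁, z₂, z₃` satisfy the period-4 system, then
`z₀ = z₂` and `z₁ = z₃`, so the cycle has period dividing 2. -/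
theorem no_prime_period_four_eq8 (α β z₀ z₁ z₂ z₃ : ℂ)
    (hparam : α ^ 2 + β ^ 2 ≠ 0)
    (h0 : z₀ ≠ 0) (h1 : z₁ ≠ 0) (h2 : z₂ ≠ 0) (h3 : z₃ ≠ 0)
    (e1 : z₁ = α + β * z₀ / z₃)
    (e2 : z₂ = α + β * z₁ / z₀)
    (e3 : z₃ = α + β * z₂ / z₁)
    (e0 : z₀ = α + β * z₃ / z₂) :
    z₀ = z₂ ∧ z₁ = z₃ := by
  have E1 := mul_eq_add_of_eq_add_div h3 e1
  have E2 := mul_eq_add_of_eq_add_div h0 e2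
  have E3 := mul_eq_add_of_eq_add_div h1 e3
  have E0 := mul_eq_add_of_eq_add_div h2 e0
  obtain ⟨hu, hv⟩ := eq_zero_and_eq_zero_of_sq_add_sq_ne_zero (u := z₀ - z₂) (v := z₁ - z₃) hparam
    (by linear_combination E0 - E2) (by linear_combination E1 - E3)
  exact ⟨sub_eq_zero.mp hu, sub_eq_zero.mp hv⟩
end

section
/- (Necessary conditions for a 2-cycle of Eq.(1).) Let α, β ∈ ℂ and let z₀, z₁ be nonzero complex numbers with z₀ ≠ z₁ satisfying z₁ = α/z₀ + β/z₁ and z₀ = α/z₁ + β/z₀. Then z₀ z₁ = α − β. If in addition β ≠ 0, then z₁ = −z₀ and z₀² = β − α; i.e., the points of any prime period-2 cycle of Eq.(1) are the two square roots of β − α. -/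
/-! Clearing denominators turns the two cycle equations into
`z₀ z₁² = α z₁ + β z₀` and `z₀² z₁ = α z₀ + β z₁`. Their difference is
`(z₀ z₁ - (α - β)) (z₁ - z₀) = 0` and their sum is `(z₀ z₁ - (α + β)) (z₁ + z₀) = 0`.
Since `z₀ ≠ z₁` the first gives `z₀ z₁ = α - β`; then `z₀ z₁ - (α + β) = -2β ≠ 0`,
so the second forces `z₁ = -z₀`. -/

section TwoCycle

variable {K : Type*} [Field K] {α β z₀ z₁ : K}

theorem mul_sq_eq_of_eq_div_add_div (h0 : z₀ ≠ 0) (h1 : z₁ ≠ 0)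
    (e : z₁ = α / z₀ + β / z₁) : z₀ * z₁ ^ 2 = α * z₁ + β * z₀ := by
  field_simp at e
  linear_combination e

theorem mul_eq_sub_of_two_cycle (hne : z₀ ≠ z₁)
    (e1 : z₀ * z₁ ^ 2 = α * z₁ + β * z₀) (e0 : z₁ * z₀ ^ 2 = α * z₀ + β * z₁) :
    z₀ * z₁ = α - β := by
  have h : (z₀ * z₁ - (α - β)) * (z₁ - z₀) = 0 := by linear_combination e1 - e0
  exact sub_eq_zero.mp ((mul_eq_zero.mp h).resolve_right (sub_ne_zero.mpr hne.symm))

theorem eq_neg_of_two_cycle [NeZero (2 : K)] (hβ : β ≠ 0) (hprod : z₀ * z₁ = α - β)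
    (e1 : z₀ * z₁ ^ 2 = α * z₁ + β * z₀) (e0 : z₁ * z₀ ^ 2 = α * z₀ + β * z₁) :
    z₁ = -z₀ := by
  have h : (z₀ * z₁ - (α + β)) * (z₁ + z₀) = 0 := by linear_combination e1 + e0
  have hfactor : z₀ * z₁ - (α + β) ≠ 0 := by
    rw [hprod, show α - β - (α + β) = -(2 * β) by ring]
    exact neg_ne_zero.mpr (mul_ne_zero two_ne_zero hβ)
  exact eq_neg_of_add_eq_zero_left ((mul_eq_zero.mp h).resolve_left hfactor)

end TwoCycle

/-- Necessary conditions for a prime period-2 cycle of Eq.(1)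
`z_{n+1} = α/z_n + β/z_{n-1}`: any 2-cycle `(z₀, z₁)` with `z₀ ≠ z₁` satisfies
`z₀ z₁ = α − β`; if moreover `β ≠ 0`, then `z₁ = −z₀` and `z₀² = β − α`. -/
theorem two_cycle_necessary_eq1 (α β z₀ z₁ : ℂ)
    (h0 : z₀ ≠ 0) (h1 : z₁ ≠ 0) (hne : z₀ ≠ z₁)
    (e1 : z₁ = α / z₀ + β / z₁)
    (e0 : z₀ = α / z₁ + β / z₀) :
    z₀ * z₁ = α - β ∧ (β ≠ 0 → z₁ = -z₀ ∧ z₀ ^ 2 = β - α) := by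
  have c1 := mul_sq_eq_of_eq_div_add_div h0 h1 e1
  have c0 := mul_sq_eq_of_eq_div_add_div h1 h0 e0
  have hprod := mul_eq_sub_of_two_cycle hne c1 c0
  refine ⟨hprod, fun hβ => ?_⟩
  have hneg := eq_neg_of_two_cycle hβ hprod c1 c0
  refine ⟨hneg, ?_⟩
  rw [hneg] at hprod
  linear_combination -hprod
end

section
/- (Existence of period-2 solutions of Eq.(1).) Let α, β ∈ ℂ with α ≠ β, and let w ∈ ℂ satisfy w² = β − α (so w ≠ 0). Then the alternating sequence z_n = (−1)ⁿ w is a solution of z_{n+1} = α/z_n + β/z_{n-1} for all n, and it is periodic of prime period 2. -/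
/-! Both `z_{n+1}` and `z_{n-1}` equal `-z_n` for `z_n = (-1)ⁿ w`, so the right-hand side of the
recursion is `(α - β) / z_n = -w² / z_n = -z_n` precisely because `w² = β - α`. -/

section NegOneZpow

variable {K : Type*} [DivisionRing K]

theorem neg_one_zpow_add_one (n : ℤ) : (-1 : K) ^ (n + 1) = -(-1) ^ n := by
  rw [zpow_add_one₀ (neg_ne_zero.mpr one_ne_zero), mul_neg_one]

theorem neg_one_zpow_sub_one (n : ℤ) : (-1 : K) ^ (n - 1) = -(-1) ^ n := by
  rw [zpow_sub_one₀ (neg_ne_zero.mpr one_ne_zero), inv_neg_one, mul_neg_one]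

theorem neg_one_zpow_add_two (n : ℤ) : (-1 : K) ^ (n + 2) = (-1) ^ n := by
  rw [← one_add_one_eq_two, ← add_assoc, neg_one_zpow_add_one, neg_one_zpow_add_one, neg_neg]

theorem neg_one_zpow_mul_self (n : ℤ) : (-1 : K) ^ n * (-1) ^ n = 1 := by
  rw [← zpow_add₀ (neg_ne_zero.mpr one_ne_zero), Even.neg_one_zpow ⟨n, rfl⟩]

theorem neg_one_zpow_add_one_mul_ne [IsAddTorsionFree K] {w : K} (hw : w ≠ 0) (n : ℤ) :
    (-1 : K) ^ (n + 1) * w ≠ (-1) ^ n * w := by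
  rw [neg_one_zpow_add_one, neg_mul, Ne, neg_eq_self]
  exact mul_ne_zero (zpow_ne_zero n (neg_ne_zero.mpr one_ne_zero)) hw

end NegOneZpow

theorem neg_one_zpow_mul_eq_div_add_div {K : Type*} [Field K] {α β w : K} (hw0 : w ≠ 0)
    (hw : w ^ 2 = β - α) (n : ℤ) :
    (-1 : K) ^ (n + 1) * w = α / ((-1) ^ n * w) + β / ((-1) ^ (n - 1) * w) := by
  rw [neg_one_zpow_add_one, neg_one_zpow_sub_one]
  field_simp
  linear_combination (-1 : K) * hw - w ^ 2 * neg_one_zpow_mul_self (K := K) n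

/-- Existence of period-2 solutions of Eq.(1): if `α ≠ β` and `w² = β − α`, then
`w ≠ 0`, the alternating sequence `z_n = (−1)ⁿ w` solves
`z_{n+1} = α/z_n + β/z_{n-1}` for all `n`, and it is periodic of prime period 2. -/
theorem two_cycle_exists_eq1 (α β w : ℂ) (hαβ : α ≠ β) (hw : w ^ 2 = β - α) :
    w ≠ 0 ∧
    (∀ n : ℤ, (-1 : ℂ) ^ (n + 1) * w =
      α / ((-1 : ℂ) ^ n * w) + β / ((-1 : ℂ) ^ (n - 1) * w)) ∧
    (∀ n : ℤ, (-1 : ℂ) ^ (n + 2) * w = (-1 : ℂ) ^ n * w) ∧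
    (∀ n : ℤ, (-1 : ℂ) ^ (n + 1) * w ≠ (-1 : ℂ) ^ n * w) := by
  have hw0 : w ≠ 0 := by
    rintro rfl
    exact hαβ (by linear_combination hw)
  exact ⟨hw0, neg_one_zpow_mul_eq_div_add_div hw0 hw, fun n => by rw [neg_one_zpow_add_two],
    neg_one_zpow_add_one_mul_ne hw0⟩
end

section
/- (Necessary conditions for a 2-cycle of Eq.(8).) Let α, β ∈ ℂ and let z₀, z₁ be nonzero complex numbers with z₀ ≠ z₁ satisfying z₁ = α + β z₀/z₁ and z₀ = α + β z₁/z₀. Then z₀ + z₁ = α − β and z₀ z₁ = −β(α − β); i.e., z₀ and z₁ are the two roots of the quadratic t² − (α − β)t − β(α − β) = 0. -/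
/-!
Clearing denominators, a 2-cycle satisfies `z₀² = α z₀ + β z₁` and `z₁² = α z₁ + β z₀`.
Subtracting the two gives `(z₀ - z₁)(z₀ + z₁) = (α - β)(z₀ - z₁)`, so `z₀ + z₁ = α - β` as
`z₀ ≠ z₁`; substituting `z₁ = (α - β) - z₀` into the first equation then yields the product.
-/

theorem mul_self_eq_add_of_eq_add_div {K : Type*} [DivisionRing K] {z a b : K}
    (hz : z ≠ 0) (h : z = a + b / z) : z * z = a * z + b :=
  calc z * z = (a + b / z) * z := by rw [← h]
    _ = a * z + b := by rw [add_mul, div_mul_cancel₀ b hz]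

section TwoCycle

variable {R : Type*} [CommRing R] {α β z₀ z₁ : R}

theorem two_cycle_add_eq [IsDomain R] (hne : z₀ ≠ z₁)
    (e0 : z₀ * z₀ = α * z₀ + β * z₁) (e1 : z₁ * z₁ = α * z₁ + β * z₀) :
    z₀ + z₁ = α - β :=
  mul_left_cancel₀ (sub_ne_zero.mpr hne) (by linear_combination e0 - e1)

theorem two_cycle_mul_eq (e0 : z₀ * z₀ = α * z₀ + β * z₁) (hsum : z₀ + z₁ = α - β) :
    z₀ * z₁ = -β * (α - β) := by
  linear_combination (z₀ - β) * hsum - e0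

end TwoCycle

/-- Necessary conditions for a prime period-2 cycle of Eq.(8)
`z_{n+1} = α + β z_n/z_{n-1}`: any 2-cycle `(z₀, z₁)` with `z₀ ≠ z₁` satisfies
`z₀ + z₁ = α − β` and `z₀ z₁ = −β(α − β)`, i.e. `z₀` and `z₁` are the two roots
of `t² − (α − β) t − β(α − β) = 0`. -/
theorem two_cycle_necessary_eq8 (α β z₀ z₁ : ℂ)
    (h0 : z₀ ≠ 0) (h1 : z₁ ≠ 0) (hne : z₀ ≠ z₁)
    (e1 : z₁ = α + β * z₀ / z₁)
    (e0 : z₀ = α + β * z₁ / z₀) :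
    (z₀ + z₁ = α - β ∧ z₀ * z₁ = -β * (α - β)) ∧
    (z₀ ^ 2 - (α - β) * z₀ - β * (α - β) = 0 ∧
     z₁ ^ 2 - (α - β) * z₁ - β * (α - β) = 0) := by
  have E0 := mul_self_eq_add_of_eq_add_div h0 e0
  have E1 := mul_self_eq_add_of_eq_add_div h1 e1
  have hsum := two_cycle_add_eq hne E0 E1
  have hprod := two_cycle_mul_eq E0 hsum
  refine ⟨⟨hsum, hprod⟩, ?_, ?_⟩
  · linear_combination z₀ * hsum - hprod
  · linear_combination z₁ * hsum - hprod
end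

section
/- (Eneström–Kakeya Theorem.) Let n ≥ 1 and let P(z) = a_n zⁿ + a_{n−1} z^{n−1} + ⋯ + a_1 z + a_0 be a polynomial with real coefficients satisfying a_n ≥ a_{n−1} ≥ ⋯ ≥ a_1 ≥ a_0 > 0. Then every complex zero z of P satisfies |z| ≤ 1. -/
/-!
Multiplying by `z - 1` telescopes `P`: `(z - 1) P(z) = aₙ zⁿ⁺¹ - Q(z)` with
`Q(z) = a₀ + ∑ (aᵢ₊₁ - aᵢ) zⁱ⁺¹`, whose coefficients are all nonnegative.
At a zero `z` with `|z| > 1` this gives `aₙ |z|ⁿ⁺¹ = |Q(z)| ≤ Q(|z|) ≤ aₙ |z|ⁿ`,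
which is impossible since `aₙ ≥ a₀ > 0`.
-/

open Finset

lemma apply_zero_le_of_forall_lt_le_succ {α : Type*} [Preorder α] {a : ℕ → α} {n : ℕ}
    (hmono : ∀ i, i < n → a i ≤ a (i + 1)) : a 0 ≤ a n := by
  induction n with
  | zero => exact le_rfl
  | succ k ih => exact (ih fun i hi => hmono i (by omega)).trans (hmono k k.lt_succ_self)

lemma sub_one_mul_sum_range_mul_pow {R : Type*} [CommRing R] (n : ℕ) (a : ℕ → R) (z : R) :
    (z - 1) * ∑ i ∈ range (n + 1), a i * z ^ i
      = a n * z ^ (n + 1) - (a 0 + ∑ i ∈ range n, (a (i + 1) - a i) * z ^ (i + 1)) := by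
  induction n with
  | zero => simp only [zero_add, range_one, sum_singleton, pow_zero, mul_one, pow_one, range_zero,
      sum_empty, add_zero]; ring
  | succ m ih =>
    rw [sum_range_succ, sum_range_succ (f := fun i => (a (i + 1) - a i) * z ^ (i + 1)),
      mul_add, ih]
    ring

lemma norm_telescoped_le (n : ℕ) (a : ℕ → ℝ) (hpos : 0 ≤ a 0)
    (hmono : ∀ i, i < n → a i ≤ a (i + 1)) (z : ℂ) :
    ‖(a 0 : ℂ) + ∑ i ∈ range n, ((a (i + 1) : ℂ) - a i) * z ^ (i + 1)‖
      ≤ a 0 + ∑ i ∈ range n, (a (i + 1) - a i) * ‖z‖ ^ (i + 1) := by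
  refine (norm_add_le _ _).trans (add_le_add ?_ ((norm_sum_le _ _).trans (sum_le_sum ?_)))
  · rw [Complex.norm_real, Real.norm_of_nonneg hpos]
  · intro i hi
    have hstep : 0 ≤ a (i + 1) - a i := sub_nonneg.2 (hmono i (mem_range.1 hi))
    rw [← Complex.ofReal_sub, norm_mul, norm_pow, Complex.norm_real, Real.norm_of_nonneg hstep]

lemma telescoped_le_of_one_le (n : ℕ) (a : ℕ → ℝ) (hpos : 0 ≤ a 0)
    (hmono : ∀ i, i < n → a i ≤ a (i + 1)) {r : ℝ} (hr : 1 ≤ r) :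
    a 0 + ∑ i ∈ range n, (a (i + 1) - a i) * r ^ (i + 1) ≤ a n * r ^ n := by
  have hsum : ∑ i ∈ range n, (a (i + 1) - a i) * r ^ (i + 1)
      ≤ ∑ i ∈ range n, (a (i + 1) - a i) * r ^ n := by
    refine sum_le_sum fun i hi => ?_
    have hi := mem_range.1 hi
    exact mul_le_mul_of_nonneg_left (pow_le_pow_right₀ hr hi) (sub_nonneg.2 (hmono i hi))
  have hfirst : a 0 ≤ a 0 * r ^ n := le_mul_of_one_le_right hpos (one_le_pow₀ hr)
  rw [← sum_mul, sum_range_sub] at hsum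
  linarith

theorem enestrom_kakeya_general (n : ℕ) (a : ℕ → ℝ)
    (hpos : 0 < a 0) (hmono : ∀ i, i < n → a i ≤ a (i + 1))
    (z : ℂ) (hz : ∑ i ∈ Finset.range (n + 1), (a i : ℂ) * z ^ i = 0) :
    ‖z‖ ≤ 1 := by
  by_contra! hz1
  have han : 0 < a n := hpos.trans_le (apply_zero_le_of_forall_lt_le_succ hmono)
  have hkey : (a n : ℂ) * z ^ (n + 1)
      = (a 0 : ℂ) + ∑ i ∈ range n, ((a (i + 1) : ℂ) - a i) * z ^ (i + 1) := by
    have h := sub_one_mul_sum_range_mul_pow n (fun i => (a i : ℂ)) z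
    rw [hz, mul_zero] at h
    linear_combination -h
  have hle : a n * ‖z‖ ^ (n + 1) ≤ a n * ‖z‖ ^ n :=
    calc a n * ‖z‖ ^ (n + 1) = ‖(a n : ℂ) * z ^ (n + 1)‖ := by
          rw [norm_mul, norm_pow, Complex.norm_real, Real.norm_of_nonneg han.le]
      _ ≤ a 0 + ∑ i ∈ range n, (a (i + 1) - a i) * ‖z‖ ^ (i + 1) :=
          hkey ▸ norm_telescoped_le n a hpos.le hmono z
      _ ≤ a n * ‖z‖ ^ n := telescoped_le_of_one_le n a hpos.le hmono hz1.le
  exact (mul_lt_mul_of_pos_left (pow_lt_pow_right₀ hz1 n.lt_succ_self) han).not_ge hle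

/-- Eneström–Kakeya Theorem: if `P(z) = ∑_{i=0}^n a_i z^i` has real coefficients with
`a_n ≥ a_{n−1} ≥ ⋯ ≥ a_1 ≥ a_0 > 0` and `n ≥ 1`, then every complex zero `z` of `P`
satisfies `|z| ≤ 1`. -/
theorem enestrom_kakeya (n : ℕ) (hn : 1 ≤ n) (a : ℕ → ℝ)
    (hpos : 0 < a 0) (hmono : ∀ i, i < n → a i ≤ a (i + 1))
    (z : ℂ) (hz : ∑ i ∈ Finset.range (n + 1), (a i : ℂ) * z ^ i = 0) :
    ‖z‖ ≤ 1 :=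
  enestrom_kakeya_general n a hpos hmono z hz
end
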